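/- arXiv:1307.3047 — 7 statements merged into one kernel-verified Lean document; each statement's English description precedes it below -/
import Mathlib

section
/- The map chi: R -> C^x defined by chi(a+ub) = i^(a+b) is a group homomorphism from the additive group of R to the nonzero complex numbers, and chi is nontrivial when restricted to every nonzero ideal of R; hence chi is a generating character and R is a Frobenius ring. -/
/-!
`χ` is the character `a ↦ i ^ a` of `ZMod 4` composed with the additive map `a + u b ↦ a + b`.
Every nonzero `a + u b` has a multiple equal to `2u` (multiply by a suitable `u c` if `a ≠ 0`,
by a suitable scalar `c` otherwise), so every nonzero ideal contains `2u`, where `χ` is `i ^ 2 = -1`.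
-/

open TrivSqZeroExt

/-- The character `χ(a + u b) = i^(a+b)` on `R = Z4 + uZ4`. -/
noncomputable def chi (x : DualNumber (ZMod 4)) : ℂ :=
  Complex.I ^ ((x.fst + x.snd : ZMod 4)).val

noncomputable def chiAddChar : AddChar (DualNumber (ZMod 4)) ℂ :=
  (AddChar.zmodChar 4 Complex.I_pow_four).compAddMonoidHom
    ((fstHom ℕ (ZMod 4) (ZMod 4)).toAddMonoidHom + (sndHom (ZMod 4) (ZMod 4)).toAddMonoidHom)

theorem coe_chiAddChar : ⇑chiAddChar = chi := rfl

theorem DualNumber.exists_mul_eq_inr {S : Type*} [CommSemiring S] {s : S}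
    (hs : ∀ a : S, a ≠ 0 → ∃ c, c * a = s) {x : DualNumber S} (hx : x ≠ 0) :
    ∃ r, r * x = inr s := by
  by_cases hfst : x.fst = 0
  · have hsnd : x.snd ≠ 0 := fun h => hx (TrivSqZeroExt.ext hfst h)
    obtain ⟨c, hc⟩ := hs _ hsnd
    refine ⟨inl c, TrivSqZeroExt.ext ?_ ?_⟩ <;> simp [hfst, hc]
  · obtain ⟨c, hc⟩ := hs _ hfst
    refine ⟨inr c, TrivSqZeroExt.ext ?_ ?_⟩ <;> simp [hc]

theorem DualNumber.inr_mem_of_ne_bot {S : Type*} [CommSemiring S] {s : S}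
    (hs : ∀ a : S, a ≠ 0 → ∃ c, c * a = s) {I : Ideal (DualNumber S)} (hI : I ≠ ⊥) :
    inr s ∈ I := by
  obtain ⟨x, hxI, hx⟩ := Submodule.exists_mem_ne_zero_of_ne_bot hI
  obtain ⟨r, hr⟩ := DualNumber.exists_mul_eq_inr hs hx
  exact hr ▸ I.mul_mem_left r hxI

theorem ZMod.exists_mul_eq_two (a : ZMod 4) (ha : a ≠ 0) : ∃ c, c * a = 2 := by
  decide +revert

theorem chi_inr_two : chi (inr 2) = -1 := by
  simp [chi, ZMod.val_two_eq_two_mod]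

/-- `χ(a+ub) = i^(a+b)` is a homomorphism from the additive group of `R`
to the nonzero complex numbers, and `χ` is nontrivial when restricted to every nonzero
ideal of `R` (i.e. `χ` is a generating character for `R`). -/
theorem stmt_5 :
    (∀ x : DualNumber (ZMod 4), chi x ≠ 0) ∧
    (∀ x y : DualNumber (ZMod 4), chi (x + y) = chi x * chi y) ∧
    (∀ I : Ideal (DualNumber (ZMod 4)), I ≠ ⊥ → ∃ x ∈ I, chi x ≠ 1) := by
  refine ⟨fun x => pow_ne_zero _ Complex.I_ne_zero, fun x y => ?_, fun I hI => ?_⟩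
  · rw [← coe_chiAddChar, AddChar.map_add_eq_mul]
  · refine ⟨inr 2, DualNumber.inr_mem_of_ne_bot ZMod.exists_mul_eq_two hI, ?_⟩
    rw [chi_inr_two]
    norm_num
end

section
/- If C is a linear code (R-submodule) of R^n, then its Gray image phi(C) is a Z4-linear code of length 2n with the same cardinality and the same Lee weight enumerator as C. -/
open TrivSqZeroExt

/-- The Lee weight on `Z4`: `w(0)=0, w(1)=w(3)=1, w(2)=2`. -/
def leeZ4 (x : ZMod 4) : ℕ := min x.val (4 - x.val)

/-- The Lee weight on `R = Z4 + uZ4`: `w(a+ub) = w(b) + w(a+b)`. -/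
def leeR (x : DualNumber (ZMod 4)) : ℕ := leeZ4 x.snd + leeZ4 (x.fst + x.snd)

/-- Lee weight of a vector over `Z4`. -/
def wtZ4 {ι : Type*} [Fintype ι] (x : ι → ZMod 4) : ℕ := ∑ i, leeZ4 (x i)

/-- Lee weight of a vector over `R`. -/
def wtR {n : ℕ} (x : Fin n → DualNumber (ZMod 4)) : ℕ := ∑ i, leeR (x i)

/-- The Gray map `φ : R^n → Z4^{2n}`, `φ(a + u b) = (b, a + b)` coordinatewise. -/
def gray {n : ℕ} (x : Fin n → DualNumber (ZMod 4)) : Fin n ⊕ Fin n → ZMod 4 :=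
  Sum.elim (fun i => (x i).snd) (fun i => (x i).fst + (x i).snd)

/-! The Gray map is `ZMod 4`-linear and injective, and the Lee weight on `R` is defined precisely
so that `φ` is an isometry; the image of `C` is therefore a `ZMod 4`-submodule in bijection with
`C`, weight by weight. -/

open Function

theorem Function.Injective.natCard_subtype_image {α β : Type*} {f : α → β} (hf : Injective f)
    (s : Set α) (p : β → Prop) :
    Nat.card {x // x ∈ s ∧ p (f x)} = Nat.card {y // y ∈ f '' s ∧ p y} := by
  calc Nat.card {x // x ∈ s ∧ p (f x)} = Nat.card ↥(s ∩ f ⁻¹' {y | p y}) := rfl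
    _ = Nat.card ↥(f '' (s ∩ f ⁻¹' {y | p y})) := (Nat.card_image_of_injective hf _).symm
    _ = Nat.card ↥(f '' s ∩ {y | p y}) := by rw [Set.image_inter_preimage]
    _ = Nat.card {y // y ∈ f '' s ∧ p y} := rfl

def grayLinearMap (n : ℕ) :
    (Fin n → DualNumber (ZMod 4)) →ₗ[ZMod 4] (Fin n ⊕ Fin n → ZMod 4) where
  toFun := gray
  map_add' x y := by
    ext (i | i) <;> simp [gray, add_add_add_comm]
  map_smul' c x := by
    ext (i | i) <;> simp [gray, mul_add]

theorem gray_injective (n : ℕ) : Injective (gray (n := n)) := by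
  intro x y h
  funext i
  have hsnd : (x i).snd = (y i).snd := congrFun h (Sum.inl i)
  have hsum : (x i).fst + (x i).snd = (y i).fst + (y i).snd := congrFun h (Sum.inr i)
  exact TrivSqZeroExt.ext (by rwa [hsnd, add_left_inj] at hsum) hsnd

theorem wtZ4_gray {n : ℕ} (x : Fin n → DualNumber (ZMod 4)) : wtZ4 (gray x) = wtR x := by
  simp only [wtZ4, wtR, leeR, gray, Fintype.sum_sum_type, Sum.elim_inl, Sum.elim_inr,
    Finset.sum_add_distrib]

/-- if `C` is a linear code over `R` of length `n`, its Gray image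
`φ(C)` is a `Z4`-linear code of length `2n` with the same cardinality and the same
Lee weight enumerator (i.e. the same number of codewords of each Lee weight). -/
theorem stmt_7 (n : ℕ) (C : Submodule (DualNumber (ZMod 4)) (Fin n → DualNumber (ZMod 4))) :
    (∃ D : Submodule (ZMod 4) (Fin n ⊕ Fin n → ZMod 4),
      (D : Set (Fin n ⊕ Fin n → ZMod 4)) = gray '' (C : Set (Fin n → DualNumber (ZMod 4)))) ∧
    Nat.card (gray '' (C : Set (Fin n → DualNumber (ZMod 4))) : Set (Fin n ⊕ Fin n → ZMod 4)) =
      Nat.card C ∧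
    ∀ w : ℕ,
      Nat.card {x : Fin n → DualNumber (ZMod 4) // x ∈ C ∧ wtR x = w} =
      Nat.card {y : Fin n ⊕ Fin n → ZMod 4 //
        y ∈ gray '' (C : Set (Fin n → DualNumber (ZMod 4))) ∧ wtZ4 y = w} := by
  refine ⟨⟨(C.restrictScalars (ZMod 4)).map (grayLinearMap n), by simp [grayLinearMap]⟩,
    Nat.card_image_of_injective (gray_injective n) _, fun w => ?_⟩
  simp only [← wtZ4_gray]
  exact (gray_injective n).natCard_subtype_image _ (fun y => wtZ4 y = w)
end

section
/- If C is a self-orthogonal linear code over R = Z4 + uZ4, then for every codeword c in C, the number of coordinates of c lying in U1 = {1,3,1+2u,3+2u} is even, and the number of coordinates lying in U2 = {1+u,3+u,1+3u,3+3u} is even. -/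
/-!
Self-orthogonality applied to `c` itself gives `∑ cᵢ² = 0`. Every square is `0`, `1` (on `U₁`) or
`1 + 2u` (on `U₂`), so `∑ cᵢ² = a + b(1 + 2u)` with `a`, `b` the numbers of coordinates in `U₁`, `U₂`.
Comparing both components in `ℤ/4` gives `a + b ≡ 0` and `2b ≡ 0 (mod 4)`, so `a` and `b` are even.
-/

open DualNumber

instance : DecidableEq (DualNumber (ZMod 4)) := inferInstanceAs (DecidableEq (ZMod 4 × ZMod 4))
instance : Fintype (DualNumber (ZMod 4)) := inferInstanceAs (Fintype (ZMod 4 × ZMod 4))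

local notation "U₁" => ({1, 3, 1 + 2 * eps, 3 + 2 * eps} : Set (DualNumber (ZMod 4)))
local notation "U₂" => ({1 + eps, 3 + eps, 1 + 3 * eps, 3 + 3 * eps} : Set (DualNumber (ZMod 4)))

lemma mul_self_eq_ite (x : DualNumber (ZMod 4)) :
    x * x = (if x ∈ U₁ then 1 else 0) + (if x ∈ U₂ then 1 + 2 * eps else 0) := by
  revert x; decide

lemma sum_mul_self_eq {ι : Type*} [Fintype ι] (c : ι → DualNumber (ZMod 4)) :
    ∑ i, c i * c i = Nat.card {i // c i ∈ U₁} • 1 + Nat.card {i // c i ∈ U₂} • (1 + 2 * eps) := by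
  simp only [mul_self_eq_ite, Nat.card_eq_fintype_card, Fintype.card_subtype]
  rw [Finset.sum_add_distrib, ← Finset.sum_filter, ← Finset.sum_filter, Finset.sum_const,
    Finset.sum_const]

lemma even_and_even_of_nsmul_add_nsmul_eq_zero {a b : ℕ}
    (h : a • (1 : DualNumber (ZMod 4)) + b • (1 + 2 * eps) = 0) : Even a ∧ Even b := by
  have h_fst : ((a + b : ℕ) : ZMod 4) = 0 := by
    simpa using congrArg TrivSqZeroExt.fst h
  have h_snd : ((2 * b : ℕ) : ZMod 4) = 0 := by
    have fst_two : TrivSqZeroExt.fst (2 : DualNumber (ZMod 4)) = 2 := rfl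
    simpa [fst_two, mul_comm] using congrArg TrivSqZeroExt.snd h
  rw [ZMod.natCast_eq_zero_iff] at h_fst h_snd
  constructor <;> rw [Nat.even_iff] <;> omega

/-- if `C ⊆ R^n` is self-orthogonal, then every codeword has an even
number of coordinates in `U1 = {1,3,1+2u,3+2u}` and an even number of coordinates in
`U2 = {1+u,3+u,1+3u,3+3u}`. -/
theorem stmt_9 (n : ℕ) (C : Submodule (DualNumber (ZMod 4)) (Fin n → DualNumber (ZMod 4)))
    (hC : ∀ x ∈ C, ∀ y ∈ C, ∑ i, x i * y i = 0) :
    ∀ c ∈ C,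
      Even (Nat.card {i : Fin n //
        c i ∈ ({1, 3, 1 + 2 * eps, 3 + 2 * eps} : Set (DualNumber (ZMod 4)))}) ∧
      Even (Nat.card {i : Fin n //
        c i ∈ ({1 + eps, 3 + eps, 1 + 3 * eps, 3 + 3 * eps} : Set (DualNumber (ZMod 4)))}) := by
  intro c hc
  apply even_and_even_of_nsmul_add_nsmul_eq_zero
  rw [← sum_mul_self_eq c]
  exact hC c hc c hc
end

section
/- If C is a self-dual linear code over R = Z4 + uZ4 of length n, then the all-2u vector (2u, 2u, ..., 2u) of length n belongs to C. -/
/-!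
Multiplication by `2ε` only sees the `ZMod 4`-part of a dual number modulo `2`, and `a * a ≡ a`
modulo `2`; hence `2ε * (y * y) = 2ε * y`. For a codeword `x` of a self-dual code this gives
`∑ 2ε * x i = 2ε * ∑ x i * x i = 0`, so the all-`2ε` vector lies in `C^⊥ = C`.
-/

open DualNumber

lemma ZMod.two_mul_mul_self_four (a : ZMod 4) : 2 * (a * a) = 2 * a := by
  revert a; decide

lemma DualNumber.eps_mul_eq_eps_mul_fst {R : Type*} [Semiring R] (x : R[ε]) :
    ε * x = ε * TrivSqZeroExt.inl x.fst := by
  ext <;> simp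

lemma DualNumber.two_eps_mul_mul_self (y : (ZMod 4)[ε]) : 2 * ε * (y * y) = 2 * ε * y := by
  have fst_two : TrivSqZeroExt.fst (2 : (ZMod 4)[ε]) = 2 := rfl
  rw [mul_comm 2 ε, mul_assoc, mul_assoc, eps_mul_eq_eps_mul_fst, eps_mul_eq_eps_mul_fst (2 * y)]
  simp only [TrivSqZeroExt.fst_mul, fst_two, ZMod.two_mul_mul_self_four]

/-- if `C ⊆ R^n` is self-dual, then the all-`2u` vector belongs to `C`. -/
theorem stmt_10 (n : ℕ) (C : Submodule (DualNumber (ZMod 4)) (Fin n → DualNumber (ZMod 4)))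
    (hC : (C : Set (Fin n → DualNumber (ZMod 4))) =
      {y | ∀ x ∈ C, ∑ i, y i * x i = 0}) :
    (fun _ : Fin n => (2 * eps : DualNumber (ZMod 4))) ∈ C := by
  have self_orthogonal : ∀ x ∈ C, ∑ i, x i * x i = 0 :=
    fun x hx => (Set.ext_iff.mp hC x).mp hx x hx
  rw [← SetLike.mem_coe, hC]
  intro x hx
  calc ∑ i, 2 * ε * x i = ∑ i, 2 * ε * (x i * x i) := by simp only [two_eps_mul_mul_self]
    _ = 2 * ε * ∑ i, x i * x i := (Finset.mul_sum ..).symm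
    _ = 0 := by rw [self_orthogonal x hx, mul_zero]
end

section
/- If C is a self-dual linear code over R = Z4 + uZ4 of length n, then mu(C) is a self-orthogonal Z4-linear code of length n, where mu(a+ub) = a. -/
open TrivSqZeroExt

theorem TrivSqZeroExt.fst_dotProduct {ι R M : Type*} [Fintype ι] [Semiring R] [AddCommMonoid M]
    [Module R M] [Module Rᵐᵒᵖ M] (x y : ι → TrivSqZeroExt R M) :
    (x ⬝ᵥ y).fst = (fun i => (x i).fst) ⬝ᵥ (fun i => (y i).fst) := by
  simp only [dotProduct, fst_sum, fst_mul]

/-- if `C ⊆ R^n` is self-dual, then the projection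
`μ(C)` (with `μ(a+ub) = a` coordinatewise) is a self-orthogonal `Z4`-code. -/
theorem stmt_13 (n : ℕ) (C : Submodule (DualNumber (ZMod 4)) (Fin n → DualNumber (ZMod 4)))
    (hC : (C : Set (Fin n → DualNumber (ZMod 4))) =
      {y | ∀ x ∈ C, ∑ i, y i * x i = 0}) :
    ∀ a₁ ∈ (fun x (i : Fin n) => (x i).fst) '' (C : Set (Fin n → DualNumber (ZMod 4))),
      ∀ a₂ ∈ (fun x (i : Fin n) => (x i).fst) '' (C : Set (Fin n → DualNumber (ZMod 4))),
        ∑ i, a₁ i * a₂ i = (0 : ZMod 4) := by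
  rintro _ ⟨x, hx, rfl⟩ _ ⟨y, hy, rfl⟩
  have hxy : x ⬝ᵥ y = 0 := (Set.ext_iff.mp hC x).mp hx y hy
  exact (fst_dotProduct x y).symm.trans (congrArg fst hxy)
end

section
/- Let C be a linear code over R = Z4 + uZ4 with mu(C) = D a nonzero Z4-linear code. If d is the minimum nonzero Lee weight of C and d' that of D, then d <= 2d'. -/
open TrivSqZeroExt

/-! Multiplication by `u` moves the `Z4`-part of a word into its `u`-part, doubling the Lee
weight: if `μ x` is a minimum-weight nonzero word of `D`, then `u • x` is a nonzero word of `C`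
of Lee weight `2 * d'`. -/

open DualNumber

theorem DualNumber.eps_mul_eq_inr {R : Type*} [Semiring R] (x : R[ε]) : ε * x = inr x.fst := by
  ext
  · rw [fst_mul, fst_eps, zero_mul, fst_inr]
  · rw [snd_mul, fst_eps, snd_eps, zero_mul, one_mul, zero_add, snd_inr]

theorem leeR_inr (a : ZMod 4) : leeR (inr a) = 2 * leeZ4 a := by
  rw [leeR, fst_inr, snd_inr, zero_add, two_mul]

theorem wtR_eps_smul {n : ℕ} (x : Fin n → DualNumber (ZMod 4)) :
    wtR ((ε : (ZMod 4)[ε]) • x) = 2 * wtZ4 (fun i => (x i).fst) := by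
  simp only [wtR, wtZ4, Finset.mul_sum, Pi.smul_apply, smul_eq_mul, eps_mul_eq_inr, leeR_inr]

theorem DualNumber.eps_smul_ne_zero {ι R : Type*} [Semiring R] {x : ι → R[ε]}
    (hx : (fun i => (x i).fst) ≠ 0) : (ε : R[ε]) • x ≠ 0 := by
  contrapose! hx
  funext i
  apply inr_injective (R := R)
  rw [Pi.zero_apply, inr_zero, ← eps_mul_eq_inr]
  exact congrFun hx i

/-- if `C` is a linear code over `R` whose projection
`μ(C) = D` (with `μ(a+ub) = a`) is nonzero, and `d`, `d'` are the minimum nonzero Lee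
weights of `C` and `D` respectively, then `d ≤ 2 * d'`. -/
theorem stmt_16 (n : ℕ) (C : Submodule (DualNumber (ZMod 4)) (Fin n → DualNumber (ZMod 4)))
    (d d' : ℕ)
    (hd : IsLeast {w | ∃ x ∈ C, x ≠ 0 ∧ wtR x = w} d)
    (hd' : IsLeast {w | ∃ y ∈ (fun x (i : Fin n) => (x i).fst) ''
        (C : Set (Fin n → DualNumber (ZMod 4))), y ≠ 0 ∧ wtZ4 y = w} d') :
    d ≤ 2 * d' := by
  obtain ⟨⟨_, ⟨x, hxC, rfl⟩, hx0, rfl⟩, -⟩ := hd'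
  rw [← wtR_eps_smul]
  exact hd.2 ⟨ε • x, C.smul_mem _ hxC, eps_smul_ne_zero hx0, rfl⟩
end

section
/- Let C be a linear code over R = Z4 + uZ4 with alpha(C) = E a nonzero (F2+uF2)-linear code, where alpha is mod-2 reduction. If d is the minimum nonzero Lee weight of C and d'' that of E, then d <= 2d''. -/
/-!
Take `x ∈ C` whose reduction `y = α(x)` is a minimum-weight word of `α(C)`. Then `x + x ∈ C`, and
since `t ↦ 2t` maps `Z4` onto `2Z4 ≅ F2` and doubles Lee weights, `wtR (x + x) = 2 * wtF y`. This is
nonzero because `y ≠ 0`, so `x + x` is a nonzero codeword of weight `2 d''`.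
-/

open TrivSqZeroExt

open TrivSqZeroExt

/-- Mod-2 reduction `α : Z4 + uZ4 → F2 + uF2`, `α(a + u b) = (a mod 2) + u (b mod 2)`. -/
def alphaMap (x : DualNumber (ZMod 4)) : DualNumber (ZMod 2) :=
  inl (ZMod.castHom (by norm_num : (2:ℕ) ∣ 4) (ZMod 2) x.fst) +
    inr (ZMod.castHom (by norm_num : (2:ℕ) ∣ 4) (ZMod 2) x.snd)

/-- The Lee weight on `F2 + uF2`: `w(0)=0, w(1)=w(1+u)=1, w(u)=2`,
written as `w(a+ub) = w(b) + w(a+b)`. -/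
def leeF (x : DualNumber (ZMod 2)) : ℕ := (x.snd).val + (x.fst + x.snd).val

/-- Lee weight of a vector over `F2 + uF2`. -/
def wtF {n : ℕ} (x : Fin n → DualNumber (ZMod 2)) : ℕ := ∑ i, leeF (x i)

lemma two_dvd_four : (2 : ℕ) ∣ 4 := by norm_num

lemma leeZ4_add_self (t : ZMod 4) :
    leeZ4 (t + t) = 2 * (ZMod.castHom two_dvd_four (ZMod 2) t).val := by
  revert t; decide

@[simp]
lemma fst_alphaMap (r : DualNumber (ZMod 4)) :
    (alphaMap r).fst = ZMod.castHom two_dvd_four (ZMod 2) r.fst := by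
  simp [alphaMap]

@[simp]
lemma snd_alphaMap (r : DualNumber (ZMod 4)) :
    (alphaMap r).snd = ZMod.castHom two_dvd_four (ZMod 2) r.snd := by
  simp [alphaMap]

lemma leeR_add_self (r : DualNumber (ZMod 4)) : leeR (r + r) = 2 * leeF (alphaMap r) := by
  have h : r.fst + r.fst + (r.snd + r.snd) = (r.fst + r.snd) + (r.fst + r.snd) := by ring
  rw [leeR, leeF, fst_add, snd_add, h, leeZ4_add_self, leeZ4_add_self, fst_alphaMap,
    snd_alphaMap, ← map_add, mul_add]

lemma wtR_add_self {n : ℕ} (x : Fin n → DualNumber (ZMod 4)) :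
    wtR (x + x) = 2 * wtF (fun i => alphaMap (x i)) := by
  simp only [wtR, wtF, Finset.mul_sum, Pi.add_apply, leeR_add_self]

@[simp]
lemma wtR_zero {n : ℕ} : wtR (0 : Fin n → DualNumber (ZMod 4)) = 0 := by
  simp [wtR, leeR, leeZ4]

lemma eq_zero_of_leeF_eq_zero {z : DualNumber (ZMod 2)} (h : leeF z = 0) : z = 0 := by
  rw [leeF, Nat.add_eq_zero_iff, ZMod.val_eq_zero, ZMod.val_eq_zero] at h
  obtain ⟨hs, hfs⟩ := h
  rw [hs, add_zero] at hfs
  exact ext hfs hs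

lemma eq_zero_of_wtF_eq_zero {n : ℕ} {y : Fin n → DualNumber (ZMod 2)} (h : wtF y = 0) :
    y = 0 := by
  rw [wtF, Finset.sum_eq_zero_iff] at h
  exact funext fun i => eq_zero_of_leeF_eq_zero (h i (Finset.mem_univ i))

/-- if `C` is a linear code over `R` whose mod-2 projection
`α(C) = E` is nonzero, and `d`, `d''` are the minimum nonzero Lee weights of `C` and
`E` respectively, then `d ≤ 2 * d''`. -/
theorem stmt_17 (n : ℕ) (C : Submodule (DualNumber (ZMod 4)) (Fin n → DualNumber (ZMod 4)))
    (d d'' : ℕ)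
    (hd : IsLeast {w | ∃ x ∈ C, x ≠ 0 ∧ wtR x = w} d)
    (hd'' : IsLeast {w | ∃ y ∈ (fun x (i : Fin n) => alphaMap (x i)) ''
        (C : Set (Fin n → DualNumber (ZMod 4))), y ≠ 0 ∧ wtF y = w} d'') :
    d ≤ 2 * d'' := by
  obtain ⟨_, ⟨x, hxC, rfl⟩, hy0, hwy⟩ := hd''.1
  have hw : wtR (x + x) = 2 * d'' := by rw [wtR_add_self, hwy]
  have hne : x + x ≠ 0 := by
    intro h0
    rw [h0, wtR_zero, ← hwy] at hw
    exact hy0 (eq_zero_of_wtF_eq_zero (by omega))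
  exact hd.2 ⟨x + x, C.add_mem hxC hxC, hne, hw⟩
end
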